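/- arXiv:2402.11222 — 3 statements merged into one kernel-verified Lean document; each statement's English description precedes it below -/
import Mathlib

section
/- Let d ≥ 2 be an integer and let G be a {K_{d,d}, P_4}-free graph. Then tree-α(G) ≤ d−1. -/
/-!
A `P₄`-free graph on at least two vertices is disconnected or the join of two smaller graphs
(Seinsche). Path decompositions of the parts combine: for a disjoint union, concatenate them;
for a join of `A` and `B`, one side, say `A`, has independence number at most `d - 1` (two
independent `d`-sets on opposite sides would span an induced `K_{d,d}`), and adding `A` to every
bag of a decomposition of `B` keeps the independence number of the bags at most `d - 1`, since
no independent set meets both `A` and `B`. Single vertices start the induction, as `d ≥ 2`.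
-/

namespace PaperTIN

open SimpleGraph

variable {V W : Type}

/-- A set of vertices is independent if no two of its members are adjacent. -/
def IsIndepSet (G : SimpleGraph V) (s : Set V) : Prop :=
  s.Pairwise fun u v => ¬ G.Adj u v

/-- The maximum size of an independent set of `G` contained in `s`,
i.e. the independence number `α(G[s])` of the induced subgraph `G[s]`. -/
noncomputable def indepNumOn (G : SimpleGraph V) (s : Set V) : ℕ :=
  sSup {n | ∃ t : Finset V, ↑t ⊆ s ∧ IsIndepSet G ↑t ∧ t.card = n}

/-- The independence number `α(G)`. -/
noncomputable def indepNum (G : SimpleGraph V) : ℕ :=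
  indepNumOn G Set.univ

/-- The maximum size of a clique of `G` contained in `s`,
i.e. the clique number `ω(G[s])` of the induced subgraph `G[s]`. -/
noncomputable def cliqueNumOn (G : SimpleGraph V) (s : Set V) : ℕ :=
  sSup {n | ∃ t : Finset V, ↑t ⊆ s ∧ G.IsClique ↑t ∧ t.card = n}

/-- A tree decomposition of a graph `G`: a tree together with a bag for each node,
such that every vertex is in some bag, both endpoints of every edge lie in a common
bag, and for every vertex the set of nodes whose bag contains it induces a connected
(hence nonempty) subtree of the tree. -/
structure TreeDecomp {V : Type} (G : SimpleGraph V) where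
  ι : Type
  tree : SimpleGraph ι
  isTree : tree.IsTree
  bag : ι → Set V
  bag_vert : ∀ v : V, ∃ t : ι, v ∈ bag t
  bag_edge : ∀ ⦃u v : V⦄, G.Adj u v → ∃ t : ι, u ∈ bag t ∧ v ∈ bag t
  bag_conn : ∀ v : V, (tree.induce {t : ι | v ∈ bag t}).Connected

/-- The independence number of a tree decomposition: the maximum, over all bags,
of the independence number of the subgraph induced by the bag. -/
noncomputable def TreeDecomp.alpha {G : SimpleGraph V} (D : TreeDecomp G) : ℕ :=
  sSup {n | ∃ t : D.ι, n = indepNumOn G (D.bag t)}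

/-- The tree-independence number `tree-α(G)`: the minimum independence number of a
tree decomposition of `G`. -/
noncomputable def treeIndepNum (G : SimpleGraph V) : ℕ :=
  sInf {n | ∃ D : TreeDecomp G, D.alpha = n}

/-- The width of a tree decomposition: maximum bag size minus one. -/
noncomputable def TreeDecomp.width {G : SimpleGraph V} (D : TreeDecomp G) : ℕ :=
  sSup {n | ∃ t : D.ι, n = (D.bag t).ncard} - 1

/-- The treewidth `tw(G)`: the minimum width of a tree decomposition of `G`. -/
noncomputable def treewidth (G : SimpleGraph V) : ℕ :=
  sInf {n | ∃ D : TreeDecomp G, D.width = n}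

/-- `Free H G` means that `G` has no induced subgraph isomorphic to `H`
(equivalently, there is no graph embedding of `H` into `G`). -/
def Free (H : SimpleGraph W) (G : SimpleGraph V) : Prop :=
  IsEmpty (H ↪g G)

/-- The star `K_{1,d}` with `d` leaves. -/
def star (d : ℕ) : SimpleGraph (Fin 1 ⊕ Fin d) :=
  completeBipartiteGraph (Fin 1) (Fin d)

/-- The complete bipartite graph `K_{m,n}`. -/
def biclique (m n : ℕ) : SimpleGraph (Fin m ⊕ Fin n) :=
  completeBipartiteGraph (Fin m) (Fin n)

/-- The open neighborhood `N(X)` of a set of vertices: all vertices having a neighbor in `X`. -/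
def nbhdSet (G : SimpleGraph V) (X : Set V) : Set V :=
  {v | ∃ x ∈ X, G.Adj x v}

/-- The closed neighborhood `N[X]` of a set of vertices. -/
def closedNbhdSet (G : SimpleGraph V) (X : Set V) : Set V :=
  X ∪ nbhdSet G X

/-- `S_p`: the tree obtained from the claw `K_{1,3}` by subdividing each edge exactly
`p-1` times; equivalently a spider with three legs, each a path on `p` vertices,
attached to a center vertex. -/
def spider (p : ℕ) : SimpleGraph (Unit ⊕ Fin 3 × Fin p) :=
  SimpleGraph.fromRel fun a b =>
    (∃ j : Fin 3, ∃ i : Fin p, a = Sum.inl () ∧ b = Sum.inr (j, i) ∧ (i : ℕ) = 0) ∨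
    (∃ j : Fin 3, ∃ i i' : Fin p, a = Sum.inr (j, i) ∧ b = Sum.inr (j, i') ∧
      (i' : ℕ) = (i : ℕ) + 1)

/-- The disjoint union of `k` copies of a graph `H`. -/
def kCopies (k : ℕ) (H : SimpleGraph W) : SimpleGraph (Fin k × W) where
  Adj a b := a.1 = b.1 ∧ H.Adj a.2 b.2
  symm := ⟨by rintro a b ⟨h1, h2⟩; exact ⟨h1.symm, h2.symm⟩⟩
  loopless := ⟨by rintro a ⟨-, h⟩; exact H.loopless.irrefl _ h⟩

/-- Membership in the family `𝒮`: every connected component is a tree with at most three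
leaves. Equivalently, the graph is a forest and each connected component contains at most
three vertices of degree one. -/
def InS [Fintype W] (S : SimpleGraph W) : Prop :=
  S.IsAcyclic ∧ ∀ c : S.ConnectedComponent,
    {v : W | S.connectedComponentMk v = c ∧ (S.neighborSet v).ncard = 1}.ncard ≤ 3

/-- Membership in the family `L(𝒮)`: the graph is isomorphic to the line graph of some
member of `𝒮`. -/
def InLS [Fintype V] (T : SimpleGraph V) : Prop :=
  ∃ (W : Type) (_ : Fintype W) (S : SimpleGraph W),
    InS S ∧ Nonempty (T ≃g S.lineGraph)

/-- The induced biclique number of `G`: the largest `n` such that `G` contains an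
induced subgraph isomorphic to `K_{n,n}`. -/
noncomputable def ibn (G : SimpleGraph V) : ℕ :=
  sSup {n | Nonempty (completeBipartiteGraph (Fin n) (Fin n) ↪g G)}

/-- The `i`-th bag (0-indexed) of the `h`-backbone structure of an induced path
`f : P_ℓ ↪g G`: the closed neighborhood of the set of vertices
`{v_i, …, v_{i+h-1}}` of the path. -/
def backboneBag (G : SimpleGraph V) {ℓ : ℕ} (f : pathGraph ℓ ↪g G) (h i : ℕ) : Set V :=
  closedNbhdSet G (⇑f '' {j : Fin ℓ | i ≤ (j : ℕ) ∧ (j : ℕ) ≤ i + h - 1})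

/-- The vertex set (as a set of vertices of the ambient graph) of a connected component
of the induced subgraph `G[s]`. -/
def componentVerts {G : SimpleGraph V} {s : Set V}
    (C : (G.induce s).ConnectedComponent) : Set V :=
  Subtype.val '' {w : s | (G.induce s).connectedComponentMk w = C}

theorem isAcyclic_hasse {α : Type*} [LinearOrder α] : (hasse α).IsAcyclic := by
  rw [isAcyclic_iff_forall_adj_isBridge]
  intro a b hab
  wlog hcov : a ⋖ b generalizing a b
  · rw [Sym2.eq_swap]
    exact this hab.symm (hab.resolve_left hcov)
  rw [isBridge_iff]
  -- walks avoiding the edge `ab` cannot leave the lower set `{x | x ≤ a}`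
  suffices h : ∀ y, ((hasse α).deleteEdges {s(a, b)}).Reachable a y → y ≤ a from
    fun hr => hcov.lt.not_ge (h b hr)
  intro y hy
  rw [reachable_iff_reflTransGen] at hy
  induction hy with
  | refl => exact le_rfl
  | @tail x y _ hxy ih =>
    rw [deleteEdges_adj, hasse_adj, Set.mem_singleton_iff] at hxy
    obtain ⟨hxy | hyx, hne⟩ := hxy
    · by_contra! hay
      have hxa : x = a := ih.antisymm (not_lt.mp fun hxa => hxy.2 hxa hay)
      subst hxa
      exact hne (by rw [hcov.unique_right hxy])
    · exact hyx.lt.le.trans ih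

theorem isTree_hasse_nat : (hasse ℕ).IsTree :=
  ⟨⟨hasse_preconnected_of_succ ℕ⟩, isAcyclic_hasse⟩

theorem connected_induce_hasse_nat_Icc {a b : ℕ} (hab : a ≤ b) :
    ((hasse ℕ).induce (Set.Icc a b)).Connected := by
  have ha : a ∈ Set.Icc a b := ⟨le_rfl, hab⟩
  suffices h : ∀ x (hx : x ∈ Set.Icc a b),
      ((hasse ℕ).induce (Set.Icc a b)).Reachable ⟨a, ha⟩ ⟨x, hx⟩ from
    (connected_iff _).mpr ⟨fun x y => (h x x.2).symm.trans (h y y.2), ⟨⟨a, ha⟩⟩⟩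
  rintro x ⟨hax, hxb⟩
  induction x, hax using Nat.le_induction with
  | base => rfl
  | succ x hax ih =>
    refine (ih (by omega)).trans (Adj.reachable ?_)
    simp [hasse_adj]

def IndepBounded (G : SimpleGraph V) (k : ℕ) (X : Set V) : Prop :=
  ∀ t : Finset V, ↑t ⊆ X → IsIndepSet G ↑t → t.card ≤ k

section IndepBounded

variable {G : SimpleGraph V} {k : ℕ} {X Y : Set V}

theorem IndepBounded.mono (h : IndepBounded G k Y) (hXY : X ⊆ Y) : IndepBounded G k X :=
  fun t ht => h t (ht.trans hXY)

theorem indepBounded_of_card_le {s : Finset V} (hs : s.card ≤ k) : IndepBounded G k s :=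
  fun _ ht _ => (Finset.card_le_card (Finset.coe_subset.mp ht)).trans hs

theorem indepNumOn_le (h : IndepBounded G k X) : indepNumOn G X ≤ k :=
  csSup_le ⟨0, ∅, by simp, by simp [IsIndepSet], rfl⟩
    (by rintro n ⟨t, htX, ht, rfl⟩; exact h t htX ht)

theorem IndepBounded.union_of_forall_adj (hX : IndepBounded G k X) (hY : IndepBounded G k Y)
    (hXY : ∀ x ∈ X, ∀ y ∈ Y, G.Adj x y) : IndepBounded G k (X ∪ Y) := by
  intro t ht hind
  by_cases htX : ↑t ⊆ X
  · exact hX t htX hind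
  obtain ⟨y, hyt, hyX⟩ := Set.not_subset.mp htX
  have hyY : y ∈ Y := (ht hyt).resolve_left hyX
  refine hY t (fun x hxt => (ht hxt).resolve_left fun hxX => ?_) hind
  have hxy := hXY x hxX y hyY
  exact hind hxt hyt hxy.ne hxy

theorem Free.indepBounded_or_of_forall_adj (h : Free (biclique (k + 1) (k + 1)) G)
    (hXY : ∀ x ∈ X, ∀ y ∈ Y, G.Adj x y) : IndepBounded G k X ∨ IndepBounded G k Y := by
  by_contra! hbig
  simp only [IndepBounded, not_forall, not_le] at hbig
  obtain ⟨⟨tX, htX, hindX, hcardX⟩, ⟨tY, htY, hindY, hcardY⟩⟩ := hbig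
  obtain ⟨f, hf⟩ := Function.Embedding.exists_of_card_le_finset (α := Fin (k + 1))
    (by simpa using hcardX)
  obtain ⟨g, hg⟩ := Function.Embedding.exists_of_card_le_finset (α := Fin (k + 1))
    (by simpa using hcardY)
  have hfX i : f i ∈ X := htX (hf ⟨i, rfl⟩)
  have hgY i : g i ∈ Y := htY (hg ⟨i, rfl⟩)
  have hff i j : ¬G.Adj (f i) (f j) := fun hadj => hindX (hf ⟨i, rfl⟩) (hf ⟨j, rfl⟩) hadj.ne hadj
  have hgg i j : ¬G.Adj (g i) (g j) := fun hadj => hindY (hg ⟨i, rfl⟩) (hg ⟨j, rfl⟩) hadj.ne hadj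
  refine h.false ⟨⟨Sum.elim f g, f.injective.sumElim g.injective
    fun i j => (hXY _ (hfX i) _ (hgY j)).ne⟩, ?_⟩
  rintro (i | i) (j | j) <;> simp [biclique, hff, hgg, hXY _ (hfX _) _ (hgY _),
    (hXY _ (hfX _) _ (hgY _)).symm]

end IndepBounded

section Cograph

variable {H : SimpleGraph V}

theorem not_free_pathGraph_four {w₀ w₁ w₂ w₃ : V} (h₀₁ : H.Adj w₀ w₁) (h₁₂ : H.Adj w₁ w₂)
    (h₂₃ : H.Adj w₂ w₃) (h₀₂ : ¬H.Adj w₀ w₂) (h₀₃ : ¬H.Adj w₀ w₃) (h₁₃ : ¬H.Adj w₁ w₃) :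
    ¬Free (pathGraph 4) H := by
  have := h₀₁.ne; have := h₁₂.ne; have := h₂₃.ne
  have : w₀ ≠ w₂ := by rintro rfl; exact h₀₃ h₂₃
  have : w₀ ≠ w₃ := by rintro rfl; exact h₀₂ h₂₃.symm
  have : w₁ ≠ w₃ := by rintro rfl; exact h₀₃ h₀₁
  refine fun h => h.false ⟨⟨![w₀, w₁, w₂, w₃], fun i j hij => ?_⟩, fun {i j} => ?_⟩
  · fin_cases i <;> fin_cases j <;> simp_all
  · change H.Adj (![w₀, w₁, w₂, w₃] i) (![w₀, w₁, w₂, w₃] j) ↔ _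
    fin_cases i <;> fin_cases j <;> simp_all [pathGraph_adj, adj_comm]

-- `P₄` is self-complementary: the path `0 - 1 - 2 - 3` of `Hᶜ` is the path `1 - 3 - 0 - 2` of `H`.
theorem Free.compl_pathGraph_four (h : Free (pathGraph 4) H) : Free (pathGraph 4) Hᶜ := by
  refine ⟨fun f => ?_⟩
  have hadj (i j : Fin 4) (hij : i ≠ j) (hn : ¬((i : ℕ) + 1 = j ∨ (j : ℕ) + 1 = i)) :
      H.Adj (f i) (f j) := by
    have := f.map_rel_iff.not.mpr (by rwa [pathGraph_adj])
    simpa [f.injective.ne hij] using this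
  have hnadj (i j : Fin 4) (ha : (i : ℕ) + 1 = j ∨ (j : ℕ) + 1 = i) : ¬H.Adj (f i) (f j) :=
    (f.map_rel_iff.mpr (pathGraph_adj.mpr ha)).2
  exact not_free_pathGraph_four (hadj 1 3 (by decide) (by decide))
    (hadj 3 0 (by decide) (by decide)) (hadj 0 2 (by decide) (by decide))
    (hnadj 1 0 (by decide)) (hnadj 1 2 (by decide)) (hnadj 3 2 (by decide)) h

end Cograph

section Partition

variable [DecidableEq V] {H : SimpleGraph V} {s A B : Finset V} {v : V}

structure IsAnticompletePartition (H : SimpleGraph V) (s A B : Finset V) : Prop where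
  union_eq : A ∪ B = s
  disjoint : Disjoint A B
  left_nonempty : A.Nonempty
  right_nonempty : B.Nonempty
  not_adj : ∀ a ∈ A, ∀ b ∈ B, ¬H.Adj a b

namespace IsAnticompletePartition

theorem symm (h : IsAnticompletePartition H s A B) : IsAnticompletePartition H s B A :=
  ⟨Finset.union_comm B A ▸ h.union_eq, h.disjoint.symm, h.right_nonempty, h.left_nonempty,
    fun b hb a ha hba => h.not_adj a ha b hb hba.symm⟩

theorem ssubset_left (h : IsAnticompletePartition H s A B) : A ⊂ s := by
  obtain ⟨b, hb⟩ := h.right_nonempty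
  rw [← h.union_eq, Finset.ssubset_iff_of_subset Finset.subset_union_left]
  exact ⟨b, Finset.mem_union_right A hb, Finset.disjoint_right.mp h.disjoint hb⟩

theorem ssubset_right (h : IsAnticompletePartition H s A B) : B ⊂ s :=
  h.symm.ssubset_left

theorem adj_of_compl (h : IsAnticompletePartition Hᶜ s A B) : ∀ a ∈ A, ∀ b ∈ B, H.Adj a b :=
  fun a ha b hb => by
    by_contra hab
    exact h.not_adj a ha b hb ⟨fun hab' => Finset.disjoint_left.mp h.disjoint ha (hab' ▸ hb), hab⟩

-- a `P₄` `y - x - v - b` would appear otherwise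
theorem not_adj_of_adj_right (hP : Free (pathGraph 4) H) (h : IsAnticompletePartition H s A B)
    {b : V} (hb : b ∈ B) (hvb : H.Adj v b) :
    ∀ x ∈ A, H.Adj v x → ∀ y ∈ A, ¬H.Adj v y → ¬H.Adj x y :=
  fun x hx hvx y hy hvy hxy => not_free_pathGraph_four hxy.symm hvx.symm hvb
    (fun hyv => hvy hyv.symm) (h.not_adj y hy b hb) (h.not_adj x hx b hb) hP

theorem exists_insert_of_not_adj (h : IsAnticompletePartition H s A B) (hv : v ∉ s)
    {u : V} (hu : u ∈ A) (hvu : ¬H.Adj v u)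
    (hsep : ∀ x ∈ A, H.Adj v x → ∀ y ∈ A, ¬H.Adj v y → ¬H.Adj x y) :
    ∃ A' B', IsAnticompletePartition H (insert v s) A' B' := by
  classical
  set A' := A.filter (fun y => ¬H.Adj v y)
  have hAs : A ⊆ s := h.union_eq ▸ Finset.subset_union_left
  have hA' : A' ⊆ insert v s :=
    (Finset.filter_subset _ _).trans (hAs.trans (Finset.subset_insert _ _))
  refine ⟨A', insert v s \ A', Finset.union_sdiff_of_subset hA', Finset.disjoint_sdiff,
    ⟨u, by simp [A', hu, hvu]⟩,
    ⟨v, by simp [A', show v ∉ A from fun hvA => hv (hAs hvA)]⟩, ?_⟩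
  intro a ha w hw
  simp only [A', Finset.mem_filter, Finset.mem_sdiff, Finset.mem_insert, not_and, not_not] at ha hw
  obtain ⟨haA, hva⟩ := ha
  obtain ⟨rfl | hws, hwA'⟩ := hw
  · exact fun haw => hva haw.symm
  rcases Finset.mem_union.mp (h.union_eq ▸ hws) with hwA | hwB
  · exact fun haw => hsep w hwA (hwA' hwA) a haA hva haw.symm
  · exact h.not_adj a haA w hwB

theorem exists_insert (hP : Free (pathGraph 4) H) (h : IsAnticompletePartition H s A B)
    (hv : v ∉ s) :
    (∃ A' B', IsAnticompletePartition H (insert v s) A' B') ∨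
      ∃ A' B', IsAnticompletePartition Hᶜ (insert v s) A' B' := by
  by_cases hall : ∀ w ∈ s, H.Adj v w
  · obtain ⟨a, ha⟩ := h.left_nonempty
    refine .inr ⟨{v}, s, (Finset.insert_eq v s).symm, Finset.disjoint_singleton_left.mpr hv,
      Finset.singleton_nonempty v, ⟨a, h.union_eq ▸ Finset.mem_union_left B ha⟩, ?_⟩
    rintro _ hv' w hw ⟨-, hvw⟩
    rw [Finset.mem_singleton] at hv'
    exact hvw (hv' ▸ hall w hw)
  push Not at hall
  obtain ⟨u, hus, hvu⟩ := hall
  refine .inl ?_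
  wlog huA : u ∈ A generalizing A B
  · exact this h.symm ((Finset.mem_union.mp (h.union_eq ▸ hus)).resolve_left huA)
  by_cases hB : ∃ b ∈ B, H.Adj v b
  · obtain ⟨b, hb, hvb⟩ := hB
    exact h.exists_insert_of_not_adj hv huA hvu (h.not_adj_of_adj_right hP hb hvb)
  · push Not at hB
    obtain ⟨b, hb⟩ := h.right_nonempty
    exact h.symm.exists_insert_of_not_adj hv hb (hB b hb) fun x hx hvx => absurd hvx (hB x hx)

end IsAnticompletePartition

theorem isAnticompletePartition_pair {w : V} (hvw : v ≠ w) (h : ¬H.Adj v w) :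
    IsAnticompletePartition H {v, w} {v} {w} :=
  ⟨(Finset.insert_eq v {w}).symm, Finset.disjoint_singleton.mpr hvw,
    Finset.singleton_nonempty v, Finset.singleton_nonempty w, by simpa using h⟩

-- Seinsche's theorem: a `P₄`-free graph on at least two vertices is disconnected or has a
-- disconnected complement.
theorem exists_isAnticompletePartition (hP : Free (pathGraph 4) H) (hs : 2 ≤ s.card) :
    (∃ A B, IsAnticompletePartition H s A B) ∨ ∃ A B, IsAnticompletePartition Hᶜ s A B := by
  induction s using Finset.induction_on with
  | empty => simp at hs
  | insert v s hv ih =>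
    rw [Finset.card_insert_of_notMem hv] at hs
    obtain hs₁ | hs₂ : s.card = 1 ∨ 2 ≤ s.card := by omega
    · obtain ⟨w, rfl⟩ := Finset.card_eq_one.mp hs₁
      have hvw : v ≠ w := by simpa using hv
      by_cases hadj : H.Adj v w
      · exact .inr ⟨_, _, isAnticompletePartition_pair hvw fun h => h.2 hadj⟩
      · exact .inl ⟨_, _, isAnticompletePartition_pair hvw hadj⟩
    rcases ih hs₂ with ⟨A, B, h⟩ | ⟨A, B, h⟩
    · exact h.exists_insert hP hv
    · have := h.exists_insert hP.compl_pathGraph_four hv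
      rwa [compl_compl, or_comm] at this

end Partition

def intervalBag (s : Finset V) (l r : V → ℕ) (i : ℕ) : Set V :=
  {v | v ∈ s ∧ l v ≤ i ∧ i ≤ r v}

@[simp] theorem mem_intervalBag {s : Finset V} {l r : V → ℕ} {i : ℕ} {v : V} :
    v ∈ intervalBag s l r i ↔ v ∈ s ∧ l v ≤ i ∧ i ≤ r v :=
  Iff.rfl

/-- A path decomposition of `G[s]` with bags indexed by `ℕ`, encoded by the interval of bags
`[l v, r v]` containing each vertex `v ∈ s`. -/
structure IsIntervalModel (G : SimpleGraph V) (k : ℕ) (s : Finset V) (l r : V → ℕ) : Prop where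
  le : ∀ v ∈ s, l v ≤ r v
  adj : ∀ u ∈ s, ∀ v ∈ s, G.Adj u v → l u ≤ r v
  indepBounded : ∀ i, IndepBounded G k (intervalBag s l r i)

section IntervalModel

variable {G : SimpleGraph V} {k : ℕ}

theorem isIntervalModel_of_card_le {s : Finset V} (hs : s.card ≤ k) : IsIntervalModel G k s 0 0 :=
  ⟨fun _ _ => le_rfl, fun _ _ _ _ _ => le_rfl,
    fun _ => (indepBounded_of_card_le hs).mono fun _ hv => hv.1⟩

variable [DecidableEq V] {A B : Finset V} {lA rA lB rB : V → ℕ}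

-- the intervals of `B` are placed to the right of all intervals of `A`
theorem IsIntervalModel.union (hA : IsIntervalModel G k A lA rA) (hB : IsIntervalModel G k B lB rB)
    (hAB : Disjoint A B) (hnadj : ∀ a ∈ A, ∀ b ∈ B, ¬G.Adj a b) :
    ∃ l r, IsIntervalModel G k (A ∪ B) l r := by
  set m := A.sup rA + 1
  have hrA : ∀ v ∈ A, rA v < m := fun v hv => Nat.lt_succ_of_le (Finset.le_sup hv)
  have hBA : ∀ v ∈ B, v ∉ A := fun v hvB hvA => Finset.disjoint_left.mp hAB hvA hvB
  refine ⟨fun v => if v ∈ A then lA v else lB v + m, fun v => if v ∈ A then rA v else rB v + m,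
    ⟨fun v hv => ?_, fun u hu v hv huv => ?_, fun i => ?_⟩⟩
  · by_cases hvA : v ∈ A
    · simpa [hvA] using hA.le v hvA
    · simpa [hvA] using hB.le v ((Finset.mem_union.mp hv).resolve_left hvA)
  · rcases Finset.mem_union.mp hu with huA | huB <;> rcases Finset.mem_union.mp hv with hvA | hvB
    · simpa [huA, hvA] using hA.adj u huA v hvA huv
    · exact absurd huv (hnadj u huA v hvB)
    · exact absurd huv.symm (hnadj v hvA u huB)
    · simpa [hBA u huB, hBA v hvB] using hB.adj u huB v hvB huv
  · by_cases hi : i < m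
    · refine (hA.indepBounded i).mono fun v ⟨hv, hlv, hrv⟩ => ?_
      by_cases hvA : v ∈ A
      · simp_all
      · simp only [hvA, if_false] at hlv; omega
    · refine (hB.indepBounded (i - m)).mono fun v ⟨hv, hlv, hrv⟩ => ?_
      by_cases hvA : v ∈ A
      · simp only [hvA, if_true] at hrv; have := hrA v hvA; omega
      · simp only [hvA, if_false] at hlv hrv
        exact ⟨(Finset.mem_union.mp hv).resolve_left hvA, by omega, by omega⟩

-- the intervals of `A` are stretched over all bags of `B`
theorem IsIntervalModel.join (hA : IndepBounded G k A) (hB : IsIntervalModel G k B lB rB)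
    (hadj : ∀ a ∈ A, ∀ b ∈ B, G.Adj a b) : ∃ l r, IsIntervalModel G k (A ∪ B) l r := by
  set m := B.sup rB
  have hrB : ∀ v ∈ B, rB v ≤ m := fun v hv => Finset.le_sup hv
  have hBA : ∀ v ∈ B, v ∉ A := fun v hvB hvA => (hadj v hvA v hvB).ne rfl
  refine ⟨fun v => if v ∈ A then 0 else lB v, fun v => if v ∈ A then m else rB v,
    ⟨fun v hv => ?_, fun u hu v hv huv => ?_, fun i => ?_⟩⟩
  · by_cases hvA : v ∈ A
    · simp [hvA]
    · simpa [hvA] using hB.le v ((Finset.mem_union.mp hv).resolve_left hvA)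
  · rcases Finset.mem_union.mp hu with huA | huB
    · simp [huA]
    rcases Finset.mem_union.mp hv with hvA | hvB
    · simpa [hBA u huB, hvA] using (hB.le u huB).trans (hrB u huB)
    · simpa [hBA u huB, hBA v hvB] using hB.adj u huB v hvB huv
  · refine (hA.union_of_forall_adj (hB.indepBounded i)
      fun a ha b hb => hadj a ha b hb.1).mono fun v ⟨hv, hlv, hrv⟩ => ?_
    by_cases hvA : v ∈ A
    · exact .inl hvA
    · simp only [hvA, if_false] at hlv hrv
      exact .inr ⟨(Finset.mem_union.mp hv).resolve_left hvA, hlv, hrv⟩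

theorem exists_isIntervalModel (hk : 1 ≤ k) (hK : Free (biclique (k + 1) (k + 1)) G)
    (hP : Free (pathGraph 4) G) (s : Finset V) : ∃ l r, IsIntervalModel G k s l r := by
  induction s using Finset.strongInduction with
  | H s ih =>
  rcases le_or_gt s.card 1 with hs | hs
  · exact ⟨0, 0, isIntervalModel_of_card_le (hs.trans hk)⟩
  rcases exists_isAnticompletePartition hP hs with ⟨A, B, h⟩ | ⟨A, B, h⟩
  · obtain ⟨lA, rA, hA⟩ := ih A h.ssubset_left
    obtain ⟨lB, rB, hB⟩ := ih B h.ssubset_right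
    exact h.union_eq ▸ hA.union hB h.disjoint h.not_adj
  · have hadj := h.adj_of_compl
    rcases hK.indepBounded_or_of_forall_adj hadj with hA | hB
    · obtain ⟨lB, rB, hB⟩ := ih B h.ssubset_right
      exact h.union_eq ▸ hB.join hA hadj
    · obtain ⟨lA, rA, hA⟩ := ih A h.ssubset_left
      rw [← h.union_eq, Finset.union_comm]
      exact hA.join hB fun b hb a ha => (hadj a ha b hb).symm

end IntervalModel

theorem treeIndepNum_le_alpha {G : SimpleGraph V} (D : TreeDecomp G) : treeIndepNum G ≤ D.alpha :=
  Nat.sInf_le ⟨D, rfl⟩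

theorem TreeDecomp.alpha_le {G : SimpleGraph V} (D : TreeDecomp G) {k : ℕ}
    (h : ∀ t, indepNumOn G (D.bag t) ≤ k) : D.alpha ≤ k :=
  have : Nonempty D.ι := D.isTree.connected.nonempty
  csSup_le ⟨_, Classical.arbitrary D.ι, rfl⟩ (by rintro n ⟨t, rfl⟩; exact h t)

def IsIntervalModel.treeDecomp [Fintype V] {G : SimpleGraph V} {k : ℕ} {l r : V → ℕ}
    (h : IsIntervalModel G k Finset.univ l r) : TreeDecomp G where
  ι := ℕ
  tree := hasse ℕ
  isTree := isTree_hasse_nat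
  bag := intervalBag Finset.univ l r
  bag_vert v := ⟨l v, by simpa using h.le v (Finset.mem_univ v)⟩
  bag_edge u v huv := ⟨max (l u) (l v), by
    have := h.le u (Finset.mem_univ u); have := h.le v (Finset.mem_univ v)
    have := h.adj u (Finset.mem_univ u) v (Finset.mem_univ v) huv
    have := h.adj v (Finset.mem_univ v) u (Finset.mem_univ u) huv.symm
    simp only [mem_intervalBag, Finset.mem_univ, true_and]; omega⟩
  bag_conn v := by
    have hIcc : {i | v ∈ intervalBag Finset.univ l r i} = Set.Icc (l v) (r v) := by ext; simp
    rw [hIcc]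
    exact connected_induce_hasse_nat_Icc (h.le v (Finset.mem_univ v))

theorem IsIntervalModel.treeIndepNum_le [Fintype V] {G : SimpleGraph V} {k : ℕ} {l r : V → ℕ}
    (h : IsIntervalModel G k Finset.univ l r) : treeIndepNum G ≤ k :=
  (treeIndepNum_le_alpha h.treeDecomp).trans
    (h.treeDecomp.alpha_le fun i => indepNumOn_le (h.indepBounded i))

/-- Let `d ≥ 2` be an integer and let `G` be a `{K_{d,d}, P_4}`-free
graph. Then `tree-α(G) ≤ d−1`. -/
theorem treeIndepNum_le_of_biclique_P4_free
    (d : ℕ) (hd : 2 ≤ d) {V : Type} [Fintype V] (G : SimpleGraph V)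
    (h1 : Free (biclique d d) G) (h2 : Free (SimpleGraph.pathGraph 4) G) :
    treeIndepNum G ≤ d - 1 := by
  classical
  obtain ⟨k, rfl⟩ : ∃ k, d = k + 1 := ⟨d - 1, by omega⟩
  obtain ⟨l, r, h⟩ := exists_isIntervalModel (by omega) h1 h2 Finset.univ
  simpa using h.treeIndepNum_le

end PaperTIN
end

section
/- Let d ≥ 1 and q ≥ 3 be integers, let G be a connected K_{1,d}-free graph with no induced cycle of length at least q, let P be an induced path in G, and let v ∈ V(G) \ V(P). Then there exists a (possibly empty) subpath P_v of P with at most 2(d−1)(q−2) vertices such that every neighbor of v on P belongs to P_v and each endpoint of P_v is adjacent to v. -/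
/-
Common definitions: tree decompositions, tree-independence number, treewidth,
independence/clique numbers, induced-subgraph freeness, and the special graphs
appearing in the paper "Treewidth versus clique number: induced minors,
distance to block graphs ... (tree-independence number)".
-/

namespace PaperTIN

open SimpleGraph

variable {V W : Type}

/-
Split the neighbours of `v` on `P` by the parity of their position: each class is independent
in the induced path `P`, so together with `v` it spans an induced star, and `v` has at most
`2(d-1)` neighbours on `P`. Two consecutive neighbours `P_i`, `P_j` close, through `v`, an
induced cycle of length `j - i + 2`, which must be shorter than `q`. Hence the neighbours span
at most `(2d-3)(q-3) + 1 ≤ 2(d-1)(q-2)` vertices of `P`.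
-/

open Finset

theorem cycleGraph_adj_iff_val {m : ℕ} {u w : Fin (m + 2)} :
    (cycleGraph (m + 2)).Adj u w ↔ (u : ℕ) + 1 = w ∨ (w : ℕ) + 1 = u ∨
      (u : ℕ) = 0 ∧ (w : ℕ) = m + 1 ∨ (w : ℕ) = 0 ∧ (u : ℕ) = m + 1 := by
  rw [cycleGraph_adj']
  have hu := u.isLt
  have hw := w.isLt
  rcases lt_trichotomy u w with h | rfl | h
  · rw [Fin.coe_sub_iff_lt.2 h, Fin.coe_sub_iff_le.2 h.le]
    rw [Fin.lt_def] at h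
    omega
  · simp only [sub_self, Fin.val_zero]
    omega
  · rw [Fin.coe_sub_iff_le.2 h.le, Fin.coe_sub_iff_lt.2 h]
    rw [Fin.lt_def] at h
    omega

def pathGraph.shift {m n : ℕ} (i : ℕ) (h : i + m ≤ n) : pathGraph m ↪g pathGraph n where
  toFun k := ⟨i + k, by omega⟩
  inj' k l hkl := by simpa [Fin.ext_iff] using hkl
  map_rel_iff' {k l} := by
    change (pathGraph n).Adj ⟨i + k, _⟩ ⟨i + l, _⟩ ↔ _
    simp only [pathGraph_adj]
    omega

theorem nonempty_cycleGraph_embedding_of_path {m : ℕ} {G : SimpleGraph V}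
    (p : pathGraph (m + 1) ↪g G) {w : V} (hw : w ∉ Set.range p)
    (hadj : ∀ k, G.Adj w (p k) ↔ k = 0 ∨ k = Fin.last m) :
    Nonempty (cycleGraph (m + 2) ↪g G) := by
  refine ⟨⟨⟨Fin.cons w p, Fin.cons_injective_iff.2 ⟨hw, p.injective⟩⟩, ?_⟩⟩
  intro a b
  induction a using Fin.cases <;> induction b using Fin.cases
  · simp
  all_goals
    simp only [Function.Embedding.coeFn_mk, Fin.cons_zero, Fin.cons_succ, hadj, G.adj_comm _ w,
      p.map_adj_iff, pathGraph_adj, cycleGraph_adj_iff_val, Fin.ext_iff, Fin.val_zero,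
      Fin.val_succ, Fin.val_last, true_and]
    omega

theorem add_three_le_of_consecutive_neighbors {G : SimpleGraph V} {q : ℕ}
    (hcyc : ∀ m, q ≤ m → IsEmpty (cycleGraph m ↪g G)) {n : ℕ} (f : pathGraph n ↪g G)
    {v : V} (hv : v ∉ Set.range f) {i j : Fin n} (hij : i < j)
    (hi : G.Adj v (f i)) (hj : G.Adj v (f j)) (hbetween : ∀ k, G.Adj v (f k) → k ≤ i ∨ j ≤ k) :
    (j : ℕ) - i + 3 ≤ q := by
  obtain ⟨m, hm⟩ : ∃ m, (j : ℕ) = i + m := ⟨j - i, by omega⟩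
  let p := f.comp (pathGraph.shift i (m := m + 1) (by omega))
  have hp (k : Fin (m + 1)) : p k = f ⟨i + k, by omega⟩ := rfl
  have hw : v ∉ Set.range p := fun ⟨k, hk⟩ => hv ⟨_, hk⟩
  have hadj (k : Fin (m + 1)) : G.Adj v (p k) ↔ k = 0 ∨ k = Fin.last m := by
    simp only [hp, Fin.ext_iff, Fin.val_zero, Fin.val_last]
    constructor
    · intro h
      have := hbetween _ h
      simp only [Fin.le_def] at this
      omega
    · rintro (h | h)
      · convert hi using 3; omega
      · convert hj using 3; omega
  obtain ⟨c⟩ := nonempty_cycleGraph_embedding_of_path p hw hadj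
  by_contra! h
  exact (hcyc (m + 2) (by omega)).false c

theorem val_sub_val_le_of_forall_gap_le {n g : ℕ} (S : Finset (Fin n))
    (hgap : ∀ i ∈ S, ∀ j ∈ S, i < j → (∀ k ∈ S, k ≤ i ∨ j ≤ k) → (j : ℕ) - i ≤ g)
    {a b : Fin n} (ha : a ∈ S) (hb : b ∈ S) : (b : ℕ) - a ≤ (S.card - 1) * g := by
  induction S using Finset.induction_on_max generalizing a b with
  | empty => simp at ha
  | insert x S hlt ih =>
    have hgapS : ∀ i ∈ S, ∀ j ∈ S, i < j → (∀ k ∈ S, k ≤ i ∨ j ≤ k) → (j : ℕ) - i ≤ g :=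
      fun i hi j hj hij hk => hgap i (mem_insert_of_mem hi) j (mem_insert_of_mem hj) hij
        (by simpa [(hlt j hj).le] using hk)
    have hcard : (insert x S).card = S.card + 1 := card_insert_of_notMem fun hx => (hlt x hx).false
    rw [hcard, Nat.add_sub_cancel]
    rcases mem_insert.1 ha with rfl | haS <;> rcases mem_insert.1 hb with rfl | hbS
    · simp
    · have := hlt b hbS; rw [Fin.lt_def] at this; omega
    · obtain ⟨c, hc⟩ : ∃ c, S.card = c + 1 := ⟨S.card - 1, by have := card_pos.2 ⟨a, haS⟩; omega⟩
      set y := S.max' ⟨a, haS⟩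
      have hy : y ∈ S := max'_mem _ _
      have hxy : (b : ℕ) - y ≤ g := hgap y (mem_insert_of_mem hy) b (mem_insert_self _ _) (hlt y hy)
        (by simpa using fun k hk => Or.inl (le_max' S k hk))
      have hya := ih hgapS haS hy
      have hay : a ≤ y := le_max' S a haS
      have hyb := hlt y hy
      rw [Fin.le_def] at hay; rw [Fin.lt_def] at hyb
      rw [hc, Nat.add_sub_cancel] at hya
      rw [hc, Nat.succ_mul]
      omega
    · exact (ih hgapS haS hbS).trans (Nat.mul_le_mul_right _ (Nat.sub_le _ _))

theorem card_lt_of_free_star {d : ℕ} {G : SimpleGraph V} (hfree : Free (star d) G) {v : V}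
    {T : Finset V} (hadj : ∀ u ∈ T, G.Adj v u) (hind : IsIndepSet G T) : T.card < d := by
  by_contra! hdT
  let e : Fin d ↪ V := (Fin.castLEEmb hdT).trans (T.equivFin.symm.toEmbedding.trans (.subtype _))
  have he (k : Fin d) : e k ∈ T := (T.equivFin.symm _).2
  refine hfree.false ⟨⟨Sum.elim (fun _ => v) e, ?_⟩, ?_⟩
  · exact Function.injective_of_subsingleton _ |>.sumElim e.injective
      fun _ k => (hadj _ (he k)).ne
  · rintro (a | a) (b | b) <;>
      simp only [Function.Embedding.coeFn_mk, Sum.elim_inl, Sum.elim_inr, star,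
        completeBipartiteGraph_adj, Sum.isLeft_inl, Sum.isRight_inl, Sum.isLeft_inr,
        Sum.isRight_inr]
    · simp
    · simpa using hadj _ (he b)
    · simpa using (hadj _ (he a)).symm
    · simp only [or_self, iff_false, Bool.false_eq_true, false_and, and_false]
      intro hab
      exact hind (he a) (he b) (fun h => G.irrefl (h ▸ hab)) hab

theorem pathGraph_not_adj_of_even_iff {n : ℕ} {i j : Fin n} (h : Even (i : ℕ) ↔ Even (j : ℕ)) :
    ¬ (pathGraph n).Adj i j := by
  rw [pathGraph_adj]
  rintro (hij | hij) <;> simp only [← hij, Nat.even_add_one, iff_not_self, not_iff_self] at h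

theorem card_le_two_mul_of_free_star {d n : ℕ} {G : SimpleGraph V}
    (hfree : Free (star d) G) (f : pathGraph n ↪g G) {v : V} {S : Finset (Fin n)}
    (hS : ∀ i ∈ S, G.Adj v (f i)) : S.card ≤ 2 * (d - 1) := by
  have hparity (T : Finset (Fin n)) (hTS : T ⊆ S)
      (hT : ∀ i ∈ T, ∀ j ∈ T, Even (i : ℕ) ↔ Even (j : ℕ)) : T.card < d := by
    rw [← card_map f.toEmbedding]
    refine card_lt_of_free_star hfree (by simpa using fun i hi => hS i (hTS hi)) ?_
    rw [IsIndepSet, coe_map]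
    rintro _ ⟨i, hi, rfl⟩ _ ⟨j, hj, rfl⟩ -
    simpa using pathGraph_not_adj_of_even_iff (hT i hi j hj)
  have heven := hparity (S.filter fun i => Even (i : ℕ)) (filter_subset _ _)
    fun i hi j hj => by simp only [mem_filter] at hi hj; tauto
  have hodd := hparity (S.filter fun i => ¬ Even (i : ℕ)) (filter_subset _ _)
    fun i hi j hj => by simp only [mem_filter] at hi hj; tauto
  rw [← card_filter_add_card_filter_not (s := S) fun i => Even (i : ℕ)]
  omega

theorem exists_short_subpath_containing_neighbors_general
    (d q : ℕ) (hq : 3 ≤ q) {V : Type}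
    (G : SimpleGraph V) (hfree : Free (star d) G)
    (hcyc : ∀ m : ℕ, q ≤ m → IsEmpty (SimpleGraph.cycleGraph m ↪g G))
    {n : ℕ} (f : SimpleGraph.pathGraph n ↪g G) (v : V) (hv : v ∉ Set.range ⇑f) :
    (∀ i : Fin n, ¬ G.Adj v (f i)) ∨
    ∃ a b : Fin n, a ≤ b ∧ (b : ℕ) - (a : ℕ) + 1 ≤ 2 * (d - 1) * (q - 2) ∧
      (∀ i : Fin n, G.Adj v (f i) → a ≤ i ∧ i ≤ b) ∧
      G.Adj v (f a) ∧ G.Adj v (f b) := by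
  classical
  set S : Finset (Fin n) := {i | G.Adj v (f i)}
  have hS (i : Fin n) : i ∈ S ↔ G.Adj v (f i) := by simp [S]
  rcases S.eq_empty_or_nonempty with hempty | hne
  · exact .inl fun i hi => by simpa [hempty] using (hS i).2 hi
  have hcard : S.card ≤ 2 * (d - 1) :=
    card_le_two_mul_of_free_star hfree f fun i hi => (hS i).1 hi
  have hspan : (S.max' hne : ℕ) - S.min' hne ≤ (S.card - 1) * (q - 3) := by
    refine val_sub_val_le_of_forall_gap_le S (fun i hi j hj hij hbetween => ?_)
      (min'_mem S hne) (max'_mem S hne)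
    have := add_three_le_of_consecutive_neighbors hcyc f hv hij ((hS i).1 hi) ((hS j).1 hj)
      fun k hk => hbetween k ((hS k).2 hk)
    omega
  have hcard_pos : 0 < S.card := card_pos.2 hne
  refine .inr ⟨S.min' hne, S.max' hne, min'_le_max' .., ?_,
    fun i hi => ⟨min'_le _ _ ((hS i).2 hi), le_max' _ _ ((hS i).2 hi)⟩,
    (hS _).1 (min'_mem S hne), (hS _).1 (max'_mem S hne)⟩
  calc (S.max' hne : ℕ) - S.min' hne + 1 ≤ (S.card - 1) * (q - 3) + 1 := by omega
    _ ≤ 2 * (d - 1) * (q - 3) + 2 * (d - 1) := by gcongr <;> omega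
    _ = 2 * (d - 1) * (q - 2) := by rw [show q - 2 = q - 3 + 1 by omega]; ring

/-- Let `d ≥ 1` and `q ≥ 3` be integers, `G` a connected
`K_{1,d}`-free graph with no induced cycle of length at least `q`, `P` an induced
path in `G`, and `v ∈ V(G) \ V(P)`. Then there is a (possibly empty) subpath `P_v`
of `P` with at most `2(d−1)(q−2)` vertices containing all neighbors of `v` on `P`,
each of whose endpoints is adjacent to `v`. -/
theorem exists_short_subpath_containing_neighbors
    (d q : ℕ) (hd : 1 ≤ d) (hq : 3 ≤ q) {V : Type} [Fintype V]
    (G : SimpleGraph V) (hconn : G.Connected) (hfree : Free (star d) G)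
    (hcyc : ∀ m : ℕ, q ≤ m → IsEmpty (SimpleGraph.cycleGraph m ↪g G))
    {n : ℕ} (f : SimpleGraph.pathGraph n ↪g G) (v : V) (hv : v ∉ Set.range ⇑f) :
    (∀ i : Fin n, ¬ G.Adj v (f i)) ∨
    ∃ a b : Fin n, a ≤ b ∧ (b : ℕ) - (a : ℕ) + 1 ≤ 2 * (d - 1) * (q - 2) ∧
      (∀ i : Fin n, G.Adj v (f i) → a ≤ i ∧ i ≤ b) ∧
      G.Adj v (f a) ∧ G.Adj v (f b) :=
  exists_short_subpath_containing_neighbors_general d q hq G hfree hcyc f v hv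

end PaperTIN
end

section
/- For any two positive integers m ≤ n, tree-α(L(K_{m,n})) = m. -/
/-
Common definitions: tree decompositions, tree-independence number, treewidth,
independence/clique numbers, induced-subgraph freeness, and the special graphs
appearing in the paper "Treewidth versus clique number: induced minors,
distance to block graphs ... (tree-independence number)".
-/

namespace PaperTIN

open SimpleGraph

variable {V W : Type}

/-
An independent set of `L(K_{m,n})` is a matching of `K_{m,n}`, so it has at most `m` edges; the
single-bag decomposition gives the upper bound. Conversely, fix a tree decomposition. View the
edges of `K_{m,n}` as the cells of an `m × n` grid: each row and each column is a clique, so by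
the Helly property of subtrees the nodes whose bags contain a whole line form a nonempty subtree.
Take a centroid `t` of these `m + n` subtrees, so that every branch at `t` contains at most
`(m + n) / 2 ≤ n` of them. A cell `(i, j)` is missing from the bag of `t` only if row `i` and
column `j` lie in a common branch at `t`, and Hall's theorem then finds `m` cells of the bag of
`t` in distinct rows and columns.
-/

section Branch

open Finset

variable {ι : Type*} {T : SimpleGraph ι} {t x y r r' : ι}

/-- For a tree and `t ~ x`, the component of `T - t` containing `x`. -/
def branch (T : SimpleGraph ι) (t x : ι) : Set ι :=
  {r | (T.deleteEdges {s(t, x)}).Reachable x r}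

lemma mem_branch_of_adj (hr : r ∈ branch T t x) (h : T.Adj r r') (hne : s(r, r') ≠ s(t, x)) :
    r' ∈ branch T t x :=
  hr.trans (Adj.reachable ((deleteEdges_adj ..).2 ⟨h, hne⟩))

lemma notMem_branch (hT : T.IsAcyclic) (h : T.Adj t x) : t ∉ branch T t x := fun ht =>
  isBridge_iff.1 (isAcyclic_iff_forall_adj_isBridge.1 hT h) ht.symm

lemma disjoint_branch_swap (hT : T.IsAcyclic) (h : T.Adj t x) :
    Disjoint (branch T t x) (branch T x t) := by
  refine Set.disjoint_left.2 fun r hx ht => notMem_branch hT h ?_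
  rw [branch, Set.mem_ofPred_eq, Sym2.eq_swap] at ht
  exact hx.trans ht.symm

lemma mem_edges_of_crosses_branch (p : T.Walk r' r) (hr' : r' ∉ branch T t x)
    (hr : r ∈ branch T t x) : s(t, x) ∈ p.edges := by
  obtain ⟨d, hd, hd₁, hd₂⟩ := p.exists_boundary_dart (branch T t x)ᶜ hr' (by simpa using hr)
  have hedge : d.edge = s(t, x) := by
    by_contra hne
    refine hd₁ (mem_branch_of_adj (not_not.1 hd₂) d.adj.symm ?_)
    rwa [Sym2.eq_swap]
  exact hedge ▸ List.mem_map_of_mem hd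

lemma disjoint_branch_of_ne (hT : T.IsAcyclic) (hx : T.Adj t x) (hy : T.Adj t y) (hxy : x ≠ y) :
    Disjoint (branch T t x) (branch T t y) := by
  classical
  refine Set.disjoint_left.2 fun r hrx hry => ?_
  obtain ⟨q⟩ := hrx
  have hx' : x ∉ branch T t y := fun h =>
    notMem_branch hT hy (mem_branch_of_adj h hx.symm (by simp [hxy, hx.ne']))
  have he := mem_edges_of_crosses_branch (q.mapLe (deleteEdges_le _)) hx' hry
  rw [Walk.edges_mapLe_eq_edges] at he
  exact notMem_branch hT hx ⟨q.takeUntil t (q.fst_mem_support_of_mem_edges he)⟩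

lemma eq_of_mem_branch (hT : T.IsAcyclic) (hx : T.Adj t x) (hy : T.Adj t y)
    (hrx : r ∈ branch T t x) (hry : r ∈ branch T t y) : x = y :=
  by_contra fun hne => Set.disjoint_left.1 (disjoint_branch_of_ne hT hx hy hne) hrx hry

lemma mem_branch_of_dist_lt (hT : T.IsTree) (h : T.dist x r < T.dist t r) : r ∈ branch T t x := by
  classical
  obtain ⟨p, -, hlen⟩ := (hT.connected.preconnected x r).exists_path_of_dist
  have ht : t ∉ p.support := fun ht =>
    have := (dist_le (p.dropUntil t ht)).trans (p.length_dropUntil_le_length ht)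
    by omega
  exact ⟨p.toDeleteEdge _ fun he => ht (p.fst_mem_support_of_mem_edges he)⟩

lemma mem_branch_iff_dist (hT : T.IsTree) (h : T.Adj t x) :
    r ∈ branch T t x ↔ T.dist t r = T.dist x r + 1 := by
  have hd := hT.dist_eq_dist_add_one_of_adj r h
  rw [dist_comm (u := r), dist_comm (u := r)] at hd
  refine ⟨fun hr => hd.resolve_right fun hxr => ?_, fun htr => mem_branch_of_dist_lt hT (by omega)⟩
  exact Set.disjoint_left.1 (disjoint_branch_swap hT.isAcyclic h) hr
    (mem_branch_of_dist_lt hT (by omega))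

/-- In a tree these are the node sets of subtrees; unlike connectedness, the property is
evidently stable under intersections. -/
def IsBranchConvex (T : SimpleGraph ι) (S : Set ι) : Prop :=
  ∀ ⦃t x r r'⦄, r ∈ S → r' ∈ S → r ∈ branch T t x → r' ∉ branch T t x → t ∈ S ∧ x ∈ S

lemma isBranchConvex_of_preconnected {S : Set ι} (hS : (T.induce S).Preconnected) :
    IsBranchConvex T S := by
  intro t x r r' hr hr' hB hB'
  obtain ⟨w⟩ := hS ⟨r', hr'⟩ ⟨r, hr⟩
  set p := w.map (Embedding.induce S).toHom
  have hp : ∀ u ∈ p.support, u ∈ S := by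
    intro u hu
    rw [Walk.support_map] at hu
    obtain ⟨v, -, rfl⟩ := List.mem_map.1 hu
    exact v.2
  have he := mem_edges_of_crosses_branch p hB' hB
  exact ⟨hp _ (p.fst_mem_support_of_mem_edges he), hp _ (p.snd_mem_support_of_mem_edges he)⟩

lemma IsBranchConvex.subset_branch (hT : T.IsTree) {S : Set ι} (hS : IsBranchConvex T S)
    (hr : r ∈ S) (ht : t ∉ S) : ∃ x, T.Adj t x ∧ S ⊆ branch T t x := by
  obtain ⟨p, -, hlen⟩ := (hT.connected.preconnected t r).exists_path_of_dist
  cases p with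
  | nil => exact absurd hr ht
  | cons h q =>
    refine ⟨_, h, fun r' hr' => by_contra fun hr'B => ht (hS hr hr' ?_ hr'B).1⟩
    refine mem_branch_of_dist_lt hT ((dist_le q).trans_lt ?_)
    rw [Walk.length_cons] at hlen
    omega

/-- Helly property, witnessed by a node minimising the total distance to representatives of the
sets that miss it. -/
theorem IsBranchConvex.iInter_nonempty (hT : T.IsTree) {κ : Type*} [Fintype κ] {S : κ → Set ι}
    (hS : ∀ i, IsBranchConvex T (S i)) (hSS : ∀ i j, (S i ∩ S j).Nonempty) :
    (⋂ i, S i).Nonempty := by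
  classical
  choose r hr using fun i => hSS i i
  have : Nonempty ι := hT.connected.nonempty
  let Ψ : ι → ℕ := fun t => ∑ i, if t ∈ S i then 0 else T.dist t (r i)
  set t := Function.argmin Ψ
  refine ⟨t, Set.mem_iInter.2 fun i₀ => by_contra fun ht => ?_⟩
  obtain ⟨x, hx, hsub⟩ := (hS i₀).subset_branch hT (hr i₀).1 ht
  have hmeets : ∀ i, ∃ z ∈ S i, z ∈ branch T t x := fun i =>
    let ⟨z, hzi, hz₀⟩ := hSS i i₀
    ⟨z, hzi, hsub hz₀⟩
  have hcloser : ∀ i, t ∉ S i → (if x ∈ S i then 0 else T.dist x (r i)) < T.dist t (r i) := by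
    intro i hi
    obtain ⟨y, hy, hsuby⟩ := (hS i).subset_branch hT (hr i).1 hi
    obtain ⟨z, hzi, hzx⟩ := hmeets i
    have hrx : r i ∈ branch T t x :=
      eq_of_mem_branch hT.isAcyclic hy hx (hsuby hzi) hzx ▸ hsuby (hr i).1
    have := (mem_branch_iff_dist hT hx).1 hrx
    split_ifs <;> omega
  have hlt : Ψ x < Ψ t := by
    refine sum_lt_sum (fun i _ => ?_) ⟨i₀, mem_univ _, by simpa [ht] using hcloser i₀ ht⟩
    by_cases hti : t ∈ S i
    · obtain ⟨z, hzi, hzx⟩ := hmeets i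
      simp [hti, (hS i hzi hti hzx (notMem_branch hT.isAcyclic hx)).2]
    · simpa [hti] using (hcloser i hti).le
  exact (Function.argmin_le Ψ x).not_gt hlt

open Classical in
/-- A centroid for a finite family of node sets: the total distance to chosen representatives
decreases along any edge towards a branch containing more than half of them. -/
theorem exists_forall_two_mul_card_subset_branch_le (hT : T.IsTree) {κ : Type*} [Fintype κ]
    {S : κ → Set ι} (hS : ∀ i, (S i).Nonempty) :
    ∃ t, ∀ x, T.Adj t x → 2 * #{i | S i ⊆ branch T t x} ≤ Fintype.card κ := by
  classical
  choose r hr using hS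
  have : Nonempty ι := hT.connected.nonempty
  let Φ : ι → ℕ := fun t => ∑ i, T.dist t (r i)
  refine ⟨Function.argmin Φ, fun x hx => ?_⟩
  set t := Function.argmin Φ
  have hmove : Φ t + #{i | r i ∉ branch T t x} = Φ x + #{i | r i ∈ branch T t x} := by
    simp only [Φ, card_filter, ← sum_add_distrib]
    refine sum_congr rfl fun i _ => ?_
    have hd := hT.dist_eq_dist_add_one_of_adj (r i) hx
    rw [dist_comm (u := r i), dist_comm (u := r i)] at hd
    by_cases hri : r i ∈ branch T t x
    · have := (mem_branch_iff_dist hT hx).1 hri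
      simp only [hri, not_true, if_true, if_false]
      omega
    · have := mt (mem_branch_iff_dist hT hx).2 hri
      simp only [hri, not_false_eq_true, if_true, if_false]
      omega
  have hsplit := card_filter_add_card_filter_not (s := univ) (fun i => r i ∈ branch T t x)
  have hsub : #{i | S i ⊆ branch T t x} ≤ #{i | r i ∈ branch T t x} :=
    card_le_card (monotone_filter_right _ fun i _ h => h (hr i))
  have hmin : Φ t ≤ Φ x := Function.argmin_le Φ x
  simp only [card_univ] at hsplit
  omega

end Branch

namespace TreeDecomp

variable {G : SimpleGraph V}

def single (G : SimpleGraph V) : TreeDecomp G where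
  ι := Unit
  tree := ⊥
  isTree := .of_subsingleton
  bag _ := Set.univ
  bag_vert _ := ⟨(), trivial⟩
  bag_edge _ _ _ := ⟨(), trivial, trivial⟩
  bag_conn v := by
    have : Nonempty {t : Unit | v ∈ Set.univ} := ⟨⟨(), trivial⟩⟩
    exact IsTree.of_subsingleton.connected

variable (D : TreeDecomp G)

def nodesContaining (s : Set V) : Set D.ι := {t | s ⊆ D.bag t}

lemma nodesContaining_anti : Antitone D.nodesContaining := fun _ _ h _ ht => h.trans ht

lemma isBranchConvex_nodesContaining (s : Set V) :
    IsBranchConvex D.tree (D.nodesContaining s) := by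
  intro t x r r' hr hr' hB hB'
  have h := fun v (hv : v ∈ s) =>
    isBranchConvex_of_preconnected (D.bag_conn v).preconnected (hr hv) (hr' hv) hB hB'
  exact ⟨fun v hv => (h v hv).1, fun v hv => (h v hv).2⟩

lemma nodesContaining_nonempty {s : Set V} (hs : s.Finite) (hc : G.IsClique s) :
    (D.nodesContaining s).Nonempty := by
  have := hs.fintype
  have hInter : D.nodesContaining s = ⋂ v : s, D.nodesContaining {v.1} := by
    ext t
    simp [nodesContaining, Set.subset_def]
  rw [hInter]
  refine IsBranchConvex.iInter_nonempty D.isTree (fun v => D.isBranchConvex_nodesContaining _)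
    fun v w => ?_
  by_cases hvw : v = w
  · obtain ⟨t, ht⟩ := D.bag_vert v
    exact ⟨t, by simpa [nodesContaining, hvw] using ht⟩
  · obtain ⟨t, hv, hw⟩ := D.bag_edge (hc v.2 w.2 (Subtype.coe_ne_coe.2 hvw))
    exact ⟨t, by simpa [nodesContaining] using hv, by simpa [nodesContaining] using hw⟩

lemma alpha_eq_of_bounds {k : ℕ} (hle : ∀ t, indepNumOn G (D.bag t) ≤ k)
    (hge : ∃ t, k ≤ indepNumOn G (D.bag t)) : D.alpha = k := by
  obtain ⟨t₀, ht₀⟩ := hge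
  refine le_antisymm (csSup_le ⟨_, t₀, rfl⟩ ?_) (le_csSup_of_le ⟨k, ?_⟩ ⟨t₀, rfl⟩ ht₀) <;>
    rintro _ ⟨t, rfl⟩ <;> exact hle t

end TreeDecomp

lemma treeIndepNum_eq_of_forall_alpha_eq {G : SimpleGraph V} {k : ℕ}
    (h : ∀ D : TreeDecomp G, D.alpha = k) : treeIndepNum G = k := by
  have hset : {n | ∃ D : TreeDecomp G, D.alpha = n} = {k} :=
    Set.eq_singleton_iff_unique_mem.2 ⟨⟨.single G, h _⟩, by rintro _ ⟨D, rfl⟩; exact h D⟩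
  rw [treeIndepNum, hset, csInf_singleton]

lemma indepNumOn_le_s17 {G : SimpleGraph V} {s : Set V} {k : ℕ}
    (h : ∀ u : Finset V, IsIndepSet G ↑u → u.card ≤ k) : indepNumOn G s ≤ k :=
  csSup_le' (by rintro _ ⟨u, -, hu, rfl⟩; exact h u hu)

lemma card_le_indepNumOn {G : SimpleGraph V} {s : Set V} {k : ℕ}
    (h : ∀ u : Finset V, IsIndepSet G ↑u → u.card ≤ k) {u : Finset V} (hus : ↑u ⊆ s)
    (hu : IsIndepSet G ↑u) : u.card ≤ indepNumOn G s :=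
  le_csSup ⟨k, by rintro _ ⟨u, -, hu, rfl⟩; exact h u hu⟩ ⟨u, hus, hu, rfl⟩

section Biclique

open Finset

variable {m n : ℕ} {i i' : Fin m} {j j' : Fin n}

def cell (i : Fin m) (j : Fin n) : (biclique m n).edgeSet :=
  ⟨s(.inl i, .inr j), by simp [biclique]⟩

lemma cell_inj : cell i j = cell i' j' ↔ i = i' ∧ j = j' := by
  simp [cell, Subtype.ext_iff]

lemma exists_cell (e : (biclique m n).edgeSet) : ∃ i j, cell i j = e := by
  obtain ⟨e, he⟩ := e
  induction e with
  | _ a b =>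
    rcases a with i | j <;> rcases b with i' | j' <;> simp [biclique] at he
    · exact ⟨i, j', rfl⟩
    · exact ⟨i', j, Subtype.ext Sym2.eq_swap⟩

lemma lineGraph_adj_cell : (biclique m n).lineGraph.Adj (cell i j) (cell i' j') ↔
    ¬(i = i' ∧ j = j') ∧ (i = i' ∨ j = j') := by
  rw [lineGraph_adj_iff_exists, Ne, cell_inj]
  simp [cell]

lemma card_le_of_isIndepSet {u : Finset (biclique m n).edgeSet}
    (hu : IsIndepSet (biclique m n).lineGraph ↑u) : u.card ≤ m := by
  choose row col hcell using exists_cell (m := m) (n := n)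
  refine (card_le_card_of_injOn row (fun _ _ => mem_univ _) fun e he e' he' hee' => ?_).trans
    (card_univ.trans (Fintype.card_fin m)).le
  by_contra hne
  refine hu he he' hne ?_
  rw [← hcell e, ← hcell e', lineGraph_adj_cell]
  exact ⟨fun h => hne (by rw [← hcell e, ← hcell e', h.1, h.2]), .inl hee'⟩

lemma isIndepSet_image_cell {f : Fin m → Fin n} (hf : Function.Injective f) :
    IsIndepSet (biclique m n).lineGraph ↑(univ.image fun i => cell i (f i)) := by
  simp only [coe_image, coe_univ, Set.image_univ]
  rintro _ ⟨i, rfl⟩ _ ⟨i', rfl⟩ hne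
  rw [lineGraph_adj_cell]
  rintro ⟨hii', rfl | h⟩
  · exact hne rfl
  · exact hne (by rw [hf h])

end Biclique

section Matching

open Finset

variable {m n : ℕ}

open Classical in
/-- Hall's condition holds: rows lying in several branches, or meeting `t`, see every column,
and rows inside a single branch see every column outside it. -/
lemma exists_injective_of_balanced {ι : Type*} {T : SimpleGraph ι} (hT : T.IsAcyclic) (t : ι)
    (hmn : m ≤ n) {R : Fin m → Set ι} {C : Fin n → Set ι} (hR : ∀ i, (R i).Nonempty)
    (hC : ∀ j, (C j).Nonempty) (P : Fin m → Fin n → Prop)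
    (hP : ∀ i j, ¬ P i j → ∃ x, T.Adj t x ∧ R i ⊆ branch T t x ∧ C j ⊆ branch T t x)
    (hbal : ∀ x, T.Adj t x → #{i | R i ⊆ branch T t x} + #{j | C j ⊆ branch T t x} ≤ n) :
    ∃ f : Fin m → Fin n, Function.Injective f ∧ ∀ i, P i (f i) := by
  let avail : Fin m → Finset (Fin n) := fun i => {j | P i j}
  have hHall : ∀ s : Finset (Fin m), s.card ≤ (s.biUnion avail).card := by
    intro s
    rcases s.eq_empty_or_nonempty with rfl | ⟨i₀, hi₀⟩
    · simp
    by_cases h : ∃ x, T.Adj t x ∧ ∀ i ∈ s, R i ⊆ branch T t x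
    · obtain ⟨x, hx, hs⟩ := h
      have hcols : ({j | ¬ C j ⊆ branch T t x} : Finset (Fin n)) ⊆ s.biUnion avail := by
        intro j hj
        refine mem_biUnion.2 ⟨i₀, hi₀, mem_filter.2 ⟨mem_univ _, by_contra fun hP' => ?_⟩⟩
        obtain ⟨y, hy, hRy, hCy⟩ := hP i₀ j hP'
        obtain ⟨z, hz⟩ := hR i₀
        rw [eq_of_mem_branch hT hy hx (hRy hz) (hs i₀ hi₀ hz)] at hCy
        exact (mem_filter.1 hj).2 hCy
      have hrows : s ⊆ ({i | R i ⊆ branch T t x} : Finset (Fin m)) := fun i hi =>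
        mem_filter.2 ⟨mem_univ _, hs i hi⟩
      have hsplit := card_filter_add_card_filter_not (s := univ) (fun j => C j ⊆ branch T t x)
      rw [card_univ, Fintype.card_fin] at hsplit
      have := card_le_card hcols
      have := card_le_card hrows
      have := hbal x hx
      omega
    · have hall : (univ : Finset (Fin n)) ⊆ s.biUnion avail := by
        intro j _
        by_contra hj
        simp only [avail, mem_biUnion, mem_filter, mem_univ, true_and, not_exists, not_and] at hj
        choose x hx hRx hCx using fun i (hi : i ∈ s) => hP i j (hj i hi)
        obtain ⟨z, hz⟩ := hC j
        refine h ⟨x i₀ hi₀, hx i₀ hi₀, fun i hi => ?_⟩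
        rw [← eq_of_mem_branch hT (hx i hi) (hx i₀ hi₀) (hCx i hi hz) (hCx i₀ hi₀ hz)]
        exact hRx i hi
      calc s.card ≤ m := (card_le_univ s).trans_eq (Fintype.card_fin m)
        _ ≤ n := hmn
        _ ≤ _ := (card_le_card hall).trans_eq' (by simp)
  obtain ⟨f, hf, hfP⟩ := (all_card_le_biUnion_card_iff_exists_injective avail).1 hHall
  exact ⟨f, hf, fun i => by simpa [avail] using hfP i⟩

open Classical in
theorem TreeDecomp.exists_injective_cell_mem_bag (hmn : m ≤ n)
    (D : TreeDecomp (biclique m n).lineGraph) :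
    ∃ t, ∃ f : Fin m → Fin n, Function.Injective f ∧ ∀ i, cell i (f i) ∈ D.bag t := by
  let R i := D.nodesContaining (Set.range (cell i))
  let C j := D.nodesContaining (Set.range fun i => cell i j)
  have hR : ∀ i, (R i).Nonempty := fun i => D.nodesContaining_nonempty (Set.finite_range _) <| by
    rintro _ ⟨j, rfl⟩ _ ⟨j', rfl⟩ hne
    exact lineGraph_adj_cell.2 ⟨fun h => hne (by rw [h.2]), .inl rfl⟩
  have hC : ∀ j, (C j).Nonempty := fun j => D.nodesContaining_nonempty (Set.finite_range _) <| by
    rintro _ ⟨i, rfl⟩ _ ⟨i', rfl⟩ hne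
    exact lineGraph_adj_cell.2 ⟨fun h => hne (by rw [h.1]), .inr rfl⟩
  obtain ⟨t, ht⟩ := exists_forall_two_mul_card_subset_branch_le D.isTree (S := Sum.elim R C)
    (by rintro (i | j); exacts [hR i, hC j])
  refine ⟨t, exists_injective_of_balanced D.isTree.isAcyclic t hmn hR hC
    (fun i j => cell i j ∈ D.bag t) (fun i j hij => ?_) fun x hx => ?_⟩
  · have hRij : R i ⊆ D.nodesContaining {cell i j} :=
      D.nodesContaining_anti (Set.singleton_subset_iff.2 ⟨j, rfl⟩)
    have hCij : C j ⊆ D.nodesContaining {cell i j} :=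
      D.nodesContaining_anti (Set.singleton_subset_iff.2 ⟨i, rfl⟩)
    obtain ⟨x, hx, hsub⟩ := (D.isBranchConvex_nodesContaining {cell i j}).subset_branch D.isTree
      (hRij (hR i).some_mem) (by simpa [TreeDecomp.nodesContaining] using hij)
    exact ⟨x, hx, hRij.trans hsub, hCij.trans hsub⟩
  · have hlines : #{l | Sum.elim R C l ⊆ branch D.tree t x} =
        #{i | R i ⊆ branch D.tree t x} + #{j | C j ⊆ branch D.tree t x} := by
      simp only [card_filter, Fintype.sum_sum_type, Sum.elim_inl, Sum.elim_inr]
      congr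
    have := ht x hx
    rw [hlines, Fintype.card_sum, Fintype.card_fin, Fintype.card_fin] at this
    omega

end Matching

theorem treeIndepNum_lineGraph_biclique_general
    (m n : ℕ) (hmn : m ≤ n) :
    treeIndepNum (SimpleGraph.lineGraph (biclique m n)) = m := by
  have hbound := fun u => card_le_of_isIndepSet (m := m) (n := n) (u := u)
  refine treeIndepNum_eq_of_forall_alpha_eq fun D =>
    D.alpha_eq_of_bounds (fun t => indepNumOn_le_s17 hbound) ?_
  obtain ⟨t, f, hf, hft⟩ := D.exists_injective_cell_mem_bag hmn
  refine ⟨t, le_of_eq_of_le ?_ (card_le_indepNumOn hbound ?_ (isIndepSet_image_cell hf))⟩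
  · rw [Finset.card_image_of_injective _ fun i i' h => (cell_inj.1 h).1, Finset.card_fin]
  · simpa [Set.subset_def] using hft

/-- For any two positive integers `m ≤ n`,
`tree-α(L(K_{m,n})) = m`. -/
theorem treeIndepNum_lineGraph_biclique
    (m n : ℕ) (hm : 0 < m) (hmn : m ≤ n) :
    treeIndepNum (SimpleGraph.lineGraph (biclique m n)) = m :=
  treeIndepNum_lineGraph_biclique_general m n hmn

end PaperTIN
end
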